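/- arXiv:2407.05894 — 3 statements merged into one kernel-verified Lean document; each statement's English description precedes it below -/
import Mathlib

section
/- Let f be a nonnegative weight with moments u_0,…,u_{2n+1}, with G_{n−1} and G_n invertible. Define p_n(c) = c^n − (1,…,c^{n−1}) G_{n−1}^{−1} u_{n,2n−1} and p_{n+1}(c) = c^{n+1} − (1,…,c^n) G_n^{−1} u_{n+1,2n+1}, and set σ_{n,n} = u_{2n} − u_{n,2n−1}^T G_{n−1}^{−1} u_{n,2n−1} and σ_{n,n+1} = u_{2n+1} − u_{n+1,2n}^T G_{n−1}^{−1} u_{n,2n−1}. Then p_{n+1}(c) = c^{n+1} − (1,…,c^{n−1}) G_{n−1}^{−1} u_{n+1,2n} − (σ_{n,n+1}/σ_{n,n}) p_n(c). -/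
/-!
Write `G_n` as `G_{n-1}` bordered by the column `v = u_{n,2n-1}` and the corner `u_{2n}`. Block
elimination solves `G_n x = (w, r)` with `w = u_{n+1,2n}`, `r = u_{2n+1}`: the last coordinate is
`t = σ_{n,n+1} / σ_{n,n}` and the others are `G_{n-1}⁻¹ w - t G_{n-1}⁻¹ v` (symmetry of the Hankel
matrix identifies `v ⬝ G_{n-1}⁻¹ w` with the term in `σ_{n,n+1}`). Substituting this solution into
`p_{n+1}` and splitting off the top coefficient gives the identity. The same elimination shows that
`G_n` is invertible as soon as `G_{n-1}` is and the Schur complement `σ_{n,n}` is nonzero.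
-/

open MeasureTheory Matrix

namespace Matrix

theorem mulVec_snoc_apply {R : Type*} [NonUnitalNonAssocSemiring R] {n : ℕ}
    (G : Matrix (Fin (n + 1)) (Fin (n + 1)) R) (x : Fin n → R) (a : R) (i : Fin (n + 1)) :
    (G *ᵥ Fin.snoc x a) i = (fun j => G i j.castSucc) ⬝ᵥ x + G i (Fin.last n) * a := by
  simp [mulVec, dotProduct, Fin.sum_univ_castSucc]

theorem IsSymm.dotProduct_inv_mulVec_comm {R ι : Type*} [CommRing R] [Fintype ι] [DecidableEq ι]
    {H : Matrix ι ι R} (hH : H.IsSymm) (v w : ι → R) :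
    v ⬝ᵥ (H⁻¹ *ᵥ w) = w ⬝ᵥ (H⁻¹ *ᵥ v) := by
  rw [dotProduct_mulVec, ← mulVec_transpose, hH.inv.eq, dotProduct_comm]

section Bordered

variable {K : Type*} [Field K] {n : ℕ} {H : Matrix (Fin n) (Fin n) K}
  {G : Matrix (Fin (n + 1)) (Fin (n + 1)) K} {b c : Fin n → K}

theorem mulVec_snoc_of_bordered (hH : IsUnit H.det)
    (hGH : ∀ i j, G i.castSucc j.castSucc = H i j)
    (hGb : ∀ i, G i.castSucc (Fin.last n) = b i) (hGc : ∀ j, G (Fin.last n) j.castSucc = c j)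
    (w : Fin n → K) (t : K) :
    G *ᵥ Fin.snoc (H⁻¹ *ᵥ w - t • H⁻¹ *ᵥ b) t =
      Fin.snoc w (c ⬝ᵥ (H⁻¹ *ᵥ w) + t * (G (Fin.last n) (Fin.last n) - c ⬝ᵥ (H⁻¹ *ᵥ b))) := by
  have hHH : ∀ x, H *ᵥ (H⁻¹ *ᵥ x) = x := fun x => by
    rw [mulVec_mulVec, mul_nonsing_inv _ hH, one_mulVec]
  funext i
  induction i using Fin.lastCases with
  | last =>
    rw [mulVec_snoc_apply, Fin.snoc_last, funext hGc, dotProduct_sub, dotProduct_smul, smul_eq_mul]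
    ring
  | cast k =>
    have hrow :
        (fun j => G k.castSucc j.castSucc) ⬝ᵥ (H⁻¹ *ᵥ w - t • H⁻¹ *ᵥ b) = w k - t * b k := by
      rw [funext (hGH k)]
      change (H *ᵥ (H⁻¹ *ᵥ w - t • H⁻¹ *ᵥ b)) k = _
      rw [mulVec_sub, mulVec_smul, hHH, hHH]
      rfl
    rw [mulVec_snoc_apply, Fin.snoc_castSucc, hrow, hGb]
    ring

theorem isUnit_of_bordered (hH : IsUnit H.det)
    (hGH : ∀ i j, G i.castSucc j.castSucc = H i j)
    (hGb : ∀ i, G i.castSucc (Fin.last n) = b i) (hGc : ∀ j, G (Fin.last n) j.castSucc = c j)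
    (hσ : G (Fin.last n) (Fin.last n) - c ⬝ᵥ (H⁻¹ *ᵥ b) ≠ 0) : IsUnit G := by
  refine mulVec_surjective_iff_isUnit.mp fun y => ?_
  have hGx := mulVec_snoc_of_bordered hH hGH hGb hGc (Fin.init y)
    ((y (Fin.last n) - c ⬝ᵥ (H⁻¹ *ᵥ Fin.init y)) / (G (Fin.last n) (Fin.last n) - c ⬝ᵥ (H⁻¹ *ᵥ b)))
  rw [div_mul_cancel₀ _ hσ, add_sub_cancel, Fin.snoc_init_self] at hGx
  exact ⟨_, hGx⟩

theorem inv_mulVec_snoc_of_bordered (hH : IsUnit H.det)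
    (hGH : ∀ i j, G i.castSucc j.castSucc = H i j)
    (hGb : ∀ i, G i.castSucc (Fin.last n) = b i) (hGc : ∀ j, G (Fin.last n) j.castSucc = c j)
    (hσ : G (Fin.last n) (Fin.last n) - c ⬝ᵥ (H⁻¹ *ᵥ b) ≠ 0) (w : Fin n → K) (r : K) :
    let t := (r - c ⬝ᵥ (H⁻¹ *ᵥ w)) / (G (Fin.last n) (Fin.last n) - c ⬝ᵥ (H⁻¹ *ᵥ b))
    G⁻¹ *ᵥ Fin.snoc w r = Fin.snoc (H⁻¹ *ᵥ w - t • H⁻¹ *ᵥ b) t := by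
  intro t
  have hG := (isUnit_iff_isUnit_det G).mp (isUnit_of_bordered hH hGH hGb hGc hσ)
  have hGx := mulVec_snoc_of_bordered hH hGH hGb hGc w t
  rw [div_mul_cancel₀ _ hσ, add_sub_cancel] at hGx
  rw [← hGx, mulVec_mulVec, nonsing_inv_mul _ hG, one_mulVec]

end Bordered

end Matrix

theorem stmt_5_general (n : ℕ)
    (u : ℕ → ℝ)
    (G1 : Matrix (Fin n) (Fin n) ℝ) (hG1 : ∀ i j, G1 i j = u ((i : ℕ) + (j : ℕ)))
    (hG1inv : IsUnit G1.det)
    (G : Matrix (Fin (n + 1)) (Fin (n + 1)) ℝ) (hGm : ∀ i j, G i j = u ((i : ℕ) + (j : ℕ)))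
    (p pp : ℝ → ℝ)
    (hp : ∀ c, p c = c ^ n -
      ∑ i : Fin n, c ^ (i : ℕ) * (G1⁻¹ *ᵥ fun i : Fin n => u (n + (i : ℕ))) i)
    (hpp : ∀ c, pp c = c ^ (n + 1) -
      ∑ i : Fin (n + 1), c ^ (i : ℕ) * (G⁻¹ *ᵥ fun i : Fin (n + 1) => u (n + 1 + (i : ℕ))) i)
    (σnn σnn1 : ℝ)
    (hσnn : σnn = u (2 * n) -
      (fun i : Fin n => u (n + (i : ℕ))) ⬝ᵥ (G1⁻¹ *ᵥ fun i : Fin n => u (n + (i : ℕ))))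
    (hσnn1 : σnn1 = u (2 * n + 1) -
      (fun i : Fin n => u (n + 1 + (i : ℕ))) ⬝ᵥ (G1⁻¹ *ᵥ fun i : Fin n => u (n + (i : ℕ))))
    (hσ : σnn ≠ 0) :
    ∀ c, pp c = c ^ (n + 1) -
      (∑ i : Fin n, c ^ (i : ℕ) * (G1⁻¹ *ᵥ fun i : Fin n => u (n + 1 + (i : ℕ))) i) -
      (σnn1 / σnn) * p c := by
  set v : Fin n → ℝ := fun i => u (n + i)
  set w : Fin n → ℝ := fun i => u (n + 1 + i)
  have hGH : ∀ i j : Fin n, G i.castSucc j.castSucc = G1 i j := by simp [hGm, hG1]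
  have hGv : ∀ i : Fin n, G i.castSucc (Fin.last n) = v i := by simp [hGm, v, add_comm]
  have hvG : ∀ j : Fin n, G (Fin.last n) j.castSucc = v j := by simp [hGm, v]
  have hGσ : G (Fin.last n) (Fin.last n) - v ⬝ᵥ (G1⁻¹ *ᵥ v) = σnn := by
    rw [hσnn, hGm, Fin.val_last, two_mul]
  have hG1symm : G1.IsSymm := IsSymm.ext fun i j => by rw [hG1, hG1, add_comm]
  have hrhs : (fun i : Fin (n + 1) => u (n + 1 + i)) = Fin.snoc w (u (2 * n + 1)) := by
    funext i
    induction i using Fin.lastCases with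
    | last => rw [Fin.val_last, Fin.snoc_last, add_right_comm, two_mul]
    | cast k => simp only [Fin.val_castSucc, Fin.snoc_castSucc, w]
  have hsol := inv_mulVec_snoc_of_bordered hG1inv hGH hGv hvG (hGσ ▸ hσ) w (u (2 * n + 1))
  dsimp only at hsol
  rw [hGσ, hG1symm.dotProduct_inv_mulVec_comm v w, ← hσnn1] at hsol
  intro c
  rw [hpp, hp, hrhs, hsol, Fin.sum_univ_castSucc]
  simp only [Fin.snoc_castSucc, Fin.snoc_last, Fin.val_castSucc, Fin.val_last, Pi.sub_apply,
    Pi.smul_apply, smul_eq_mul, mul_sub, Finset.sum_sub_distrib, mul_left_comm _ (σnn1 / σnn),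
    ← Finset.mul_sum]
  ring

theorem stmt_5 (n : ℕ) (hn : 0 < n) (f : ℝ → ℝ) (hf : ∀ c, 0 ≤ f c)
    (hmom : ∀ k ≤ 2 * n + 1, Integrable (fun c => c ^ k * f c))
    (u : ℕ → ℝ) (hu : ∀ k, u k = ∫ c, c ^ k * f c)
    (G1 : Matrix (Fin n) (Fin n) ℝ) (hG1 : ∀ i j, G1 i j = u ((i : ℕ) + (j : ℕ)))
    (hG1inv : IsUnit G1.det)
    (G : Matrix (Fin (n + 1)) (Fin (n + 1)) ℝ) (hGm : ∀ i j, G i j = u ((i : ℕ) + (j : ℕ)))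
    (hGinv : IsUnit G.det)
    (p pp : ℝ → ℝ)
    (hp : ∀ c, p c = c ^ n -
      ∑ i : Fin n, c ^ (i : ℕ) * (G1⁻¹ *ᵥ fun i : Fin n => u (n + (i : ℕ))) i)
    (hpp : ∀ c, pp c = c ^ (n + 1) -
      ∑ i : Fin (n + 1), c ^ (i : ℕ) * (G⁻¹ *ᵥ fun i : Fin (n + 1) => u (n + 1 + (i : ℕ))) i)
    (σnn σnn1 : ℝ)
    (hσnn : σnn = u (2 * n) -
      (fun i : Fin n => u (n + (i : ℕ))) ⬝ᵥ (G1⁻¹ *ᵥ fun i : Fin n => u (n + (i : ℕ))))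
    (hσnn1 : σnn1 = u (2 * n + 1) -
      (fun i : Fin n => u (n + 1 + (i : ℕ))) ⬝ᵥ (G1⁻¹ *ᵥ fun i : Fin n => u (n + (i : ℕ))))
    (hσ : σnn ≠ 0) :
    ∀ c, pp c = c ^ (n + 1) -
      (∑ i : Fin n, c ^ (i : ℕ) * (G1⁻¹ *ᵥ fun i : Fin n => u (n + 1 + (i : ℕ))) i) -
      (σnn1 / σnn) * p c :=
  stmt_5_general n u G1 hG1 hG1inv G hGm p pp hp hpp σnn σnn1 hσnn hσnn1 hσ
end

section
/- Under the Gramian closure u_{2n+1} = u_{n+1,2n}^T G_{n−1}^{−1} u_{n,2n−1} (with G_{n−1} invertible), the product of the monic orthogonal polynomials satisfies p_n(c) · p_{n+1}(c) = c^{2n+1} − Σ_{k=0}^{2n} (∂C/∂u_k) c^k, where C(u_0,…,u_{2n}) = u_{n+1,2n}^T G_{n−1}^{−1} u_{n,2n−1} and p_{n+1} is computed using the closed moment u_{2n+1} = C(u_0,…,u_{2n}). -/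
/-!
The sum `∑ₖ (∂C/∂uₖ) cᵏ` is the differential of `C` at `u` applied to the moment sequence
`(cᵏ)ₖ` of the point mass at `c`. Its Hankel matrix is the rank-one matrix `x xᵀ` with
`x = (cⁱ)ᵢ`, and its two moment windows are `cⁿ x` and `cⁿ⁺¹ x`. With `a = u_{n,2n-1}`,
`b = u_{n+1,2n}` and `∂(G⁻¹) = -G⁻¹ (∂G) G⁻¹`, the differential is therefore
`cⁿ⁺¹ xᵀG⁻¹a + cⁿ bᵀG⁻¹x - (bᵀG⁻¹x)(xᵀG⁻¹a)`. Since `G` is symmetric, `bᵀG⁻¹x = xᵀG⁻¹b`, and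
the expression equals `c²ⁿ⁺¹ - (cⁿ - xᵀG⁻¹a)(cⁿ⁺¹ - xᵀG⁻¹b) = c²ⁿ⁺¹ - pₙ(c) pₙ₊₁(c)`.
-/

open Matrix

section MatrixCalculus

variable {𝕜 ι E : Type*} [NontriviallyNormedField 𝕜] [Fintype ι] [NormedAddCommGroup E]
  [NormedSpace 𝕜 E] {u : E}

theorem DifferentiableAt.dotProduct {a b : E → ι → 𝕜} (ha : DifferentiableAt 𝕜 a u)
    (hb : DifferentiableAt 𝕜 b u) : DifferentiableAt 𝕜 (fun w => a w ⬝ᵥ b w) u :=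
  .fun_sum fun i _ => (differentiableAt_pi.1 ha i).mul (differentiableAt_pi.1 hb i)

theorem fderiv_dotProduct_apply {a b : E → ι → 𝕜} (ha : DifferentiableAt 𝕜 a u)
    (hb : DifferentiableAt 𝕜 b u) (h : E) :
    fderiv 𝕜 (fun w => a w ⬝ᵥ b w) u h = fderiv 𝕜 a u h ⬝ᵥ b u + a u ⬝ᵥ fderiv 𝕜 b u h := by
  simp only [dotProduct]
  rw [fderiv_fun_sum (A := fun i w => a w i * b w i)
    fun i _ => (differentiableAt_pi.1 ha i).mul (differentiableAt_pi.1 hb i),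
    ← Finset.sum_add_distrib, _root_.sum_apply]
  refine Finset.sum_congr rfl fun i _ => ?_
  rw [fderiv_fun_mul (differentiableAt_pi.1 ha i) (differentiableAt_pi.1 hb i), fderiv_apply ha,
    fderiv_apply hb]
  simp only [_root_.add_apply, _root_.smul_apply,
    ContinuousLinearMap.comp_apply, ContinuousLinearMap.proj_apply, smul_eq_mul]
  ring

theorem DifferentiableAt.mulVec {N : E → Matrix ι ι 𝕜} {a : E → ι → 𝕜}
    (hN : DifferentiableAt 𝕜 N u) (ha : DifferentiableAt 𝕜 a u) :
    DifferentiableAt 𝕜 (fun w => N w *ᵥ a w) u :=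
  differentiableAt_pi.2 fun i => (differentiableAt_pi.1 hN i).dotProduct ha

theorem fderiv_mulVec_apply {N : E → Matrix ι ι 𝕜} {a : E → ι → 𝕜}
    (hN : DifferentiableAt 𝕜 N u) (ha : DifferentiableAt 𝕜 a u) (h : E) :
    fderiv 𝕜 (fun w => N w *ᵥ a w) u h = fderiv 𝕜 N u h *ᵥ a u + N u *ᵥ fderiv 𝕜 a u h := by
  ext i
  calc fderiv 𝕜 (fun w => N w *ᵥ a w) u h i = fderiv 𝕜 (fun w => N w i ⬝ᵥ a w) u h := by
        exact (congrArg (· h) (fderiv_apply (hN.mulVec ha) i)).symm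
    _ = _ := by rw [fderiv_dotProduct_apply (differentiableAt_pi.1 hN i) ha, fderiv_apply hN]; rfl

variable [CompleteSpace 𝕜] [DecidableEq ι]

theorem HasFDerivAt.matrix_inv {M : E → Matrix ι ι 𝕜} {M' : E →L[𝕜] Matrix ι ι 𝕜}
    (hM : HasFDerivAt M M' u) (hu : IsUnit (M u).det) :
    HasFDerivAt (fun w => (M w)⁻¹)
      (-(LinearMap.mulLeftRight 𝕜 ((M u)⁻¹, (M u)⁻¹)).toContinuousLinearMap.comp M') u := by
  -- `HasFDerivAt` only sees the topology, so any algebra norm on matrices may be used.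
  let : NormedRing (Matrix ι ι 𝕜) := Matrix.linftyOpNormedRing
  let : NormedAlgebra 𝕜 (Matrix ι ι 𝕜) := Matrix.linftyOpNormedAlgebra
  have :=
    @instHasSummableGeomSeriesOfCompleteSpace _ _ (FiniteDimensional.complete 𝕜 (Matrix ι ι 𝕜))
  obtain ⟨U, hU⟩ := (Matrix.isUnit_iff_isUnit_det _).mpr hu
  have hinv := hasFDerivAt_ringInverse (𝕜 := 𝕜) U
  rw [hU] at hinv
  replace hinv := hinv.comp u hM
  rw [Matrix.coe_units_inv, hU] at hinv
  rw [show (fun w => (M w)⁻¹) = Ring.inverse ∘ M from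
    funext fun w => Matrix.nonsing_inv_eq_ringInverse _]
  exact hinv

theorem fderiv_dotProduct_inv_mulVec_apply {a b : E → ι → 𝕜} {M : E → Matrix ι ι 𝕜}
    (ha : DifferentiableAt 𝕜 a u) (hb : DifferentiableAt 𝕜 b u) (hM : DifferentiableAt 𝕜 M u)
    (hu : IsUnit (M u).det) (h : E) :
    fderiv 𝕜 (fun w => b w ⬝ᵥ (M w)⁻¹ *ᵥ a w) u h =
      fderiv 𝕜 b u h ⬝ᵥ (M u)⁻¹ *ᵥ a u + b u ⬝ᵥ (M u)⁻¹ *ᵥ fderiv 𝕜 a u h -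
        b u ⬝ᵥ ((M u)⁻¹ * fderiv 𝕜 M u h * (M u)⁻¹) *ᵥ a u := by
  have hN := hM.hasFDerivAt.matrix_inv hu
  rw [fderiv_dotProduct_apply hb (hN.differentiableAt.mulVec ha),
    fderiv_mulVec_apply hN.differentiableAt ha, hN.fderiv]
  simp only [_root_.neg_apply, ContinuousLinearMap.comp_apply, LinearMap.coe_toContinuousLinearMap',
    LinearMap.mulLeftRight_apply, neg_mulVec, dotProduct_add, dotProduct_neg]
  ring

end MatrixCalculus

theorem map_eq_sum_map_single_mul {R ι F : Type*} [CommSemiring R] [Fintype ι] [DecidableEq ι]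
    [FunLike F (ι → R) R] [LinearMapClass F R (ι → R) R] (L : F) (v : ι → R) :
    L v = ∑ k, L (Pi.single k 1) * v k := by
  conv_lhs => rw [← Finset.univ_sum_single v]
  simp only [map_sum]
  refine Finset.sum_congr rfl fun k _ => ?_
  rw [mul_comm, ← smul_eq_mul, ← map_smul, ← Pi.single_smul, smul_eq_mul, mul_one]

section Hankel
variable {R : Type*} [CommRing R]

theorem Matrix.IsSymm.sub_dotProduct_mul_sub_dotProduct {ι : Type*} [Fintype ι]
    {A : Matrix ι ι R} (hA : A.IsSymm) (x a b : ι → R) (s t : R) :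
    (s - x ⬝ᵥ A *ᵥ a) * (t - x ⬝ᵥ A *ᵥ b) =
      s * t - ((t • x) ⬝ᵥ A *ᵥ a + b ⬝ᵥ A *ᵥ (s • x) - b ⬝ᵥ (A * vecMulVec x x * A) *ᵥ a) := by
  have hb : b ⬝ᵥ A *ᵥ x = x ⬝ᵥ A *ᵥ b := by
    rw [dotProduct_mulVec, ← mulVec_transpose, hA.eq, dotProduct_comm]
  rw [← mulVec_mulVec, ← mulVec_mulVec, vecMulVec_mulVec, mulVec_smul, dotProduct_smul, mulVec_smul,
    dotProduct_smul, smul_dotProduct, hb]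
  simp only [smul_eq_mul, MulOpposite.smul_eq_mul_unop, MulOpposite.unop_op]
  ring

def powerVec (m : ℕ) (c : R) : Fin m → R := fun i => c ^ (i : ℕ)

variable [TopologicalSpace R] (n : ℕ)

def momentWindow (k : ℕ) (hk : k ≤ n + 1) : (Fin (2 * n + 1) → R) →L[R] Fin n → R :=
  ContinuousLinearMap.pi fun i => ContinuousLinearMap.proj ⟨k + i, by omega⟩

def hankel : (Fin (2 * n + 1) → R) →L[R] Matrix (Fin n) (Fin n) R :=
  ContinuousLinearMap.pi fun i => ContinuousLinearMap.pi fun j =>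
    ContinuousLinearMap.proj ⟨i + j, by omega⟩

@[simp] theorem momentWindow_apply (k : ℕ) (hk : k ≤ n + 1) (w : Fin (2 * n + 1) → R) (i : Fin n) :
    momentWindow n k hk w i = w ⟨k + i, by omega⟩ := rfl

@[simp] theorem hankel_apply (w : Fin (2 * n + 1) → R) (i j : Fin n) :
    hankel n w i j = w ⟨i + j, by omega⟩ := rfl

theorem hankel_isSymm (w : Fin (2 * n + 1) → R) : (hankel n w).IsSymm :=
  Matrix.IsSymm.ext fun i j => by simp [add_comm]

theorem momentWindow_pow (k : ℕ) (hk : k ≤ n + 1) (c : R) :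
    momentWindow n k hk (powerVec _ c) = c ^ k • powerVec n c := by
  ext i; simp [powerVec, pow_add]

theorem hankel_pow (c : R) :
    hankel n (powerVec _ c) = vecMulVec (powerVec n c) (powerVec n c) := by
  ext i j; simp [powerVec, vecMulVec_apply, pow_add]

end Hankel

theorem stmt_6 (n : ℕ)
    (Cl : (Fin (2 * n + 1) → ℝ) → ℝ)
    (hCl : ∀ w : Fin (2 * n + 1) → ℝ, Cl w =
      (fun i : Fin n => w ⟨n + 1 + (i : ℕ), by have := i.2; omega⟩) ⬝ᵥ
        ((Matrix.of fun i j : Fin n =>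
            w ⟨(i : ℕ) + (j : ℕ), by have := i.2; have := j.2; omega⟩)⁻¹ *ᵥ
          fun i : Fin n => w ⟨n + (i : ℕ), by have := i.2; omega⟩))
    (u : Fin (2 * n + 1) → ℝ)
    (G : Matrix (Fin n) (Fin n) ℝ)
    (hG : ∀ i j : Fin n, G i j = u ⟨(i : ℕ) + (j : ℕ), by have := i.2; have := j.2; omega⟩)
    (hGinv : IsUnit G.det)
    (p pp : ℝ → ℝ)
    (hp : ∀ c, p c = c ^ n - ∑ i : Fin n, c ^ (i : ℕ) *
      (G⁻¹ *ᵥ fun i : Fin n => u ⟨n + (i : ℕ), by have := i.2; omega⟩) i)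
    (hpp : ∀ c, pp c = c ^ (n + 1) - ∑ i : Fin n, c ^ (i : ℕ) *
      (G⁻¹ *ᵥ fun i : Fin n => u ⟨n + 1 + (i : ℕ), by have := i.2; omega⟩) i) :
    ∀ c, p c * pp c = c ^ (2 * n + 1) -
      ∑ k : Fin (2 * n + 1), (fderiv ℝ Cl u) (Pi.single k 1) * c ^ (k : ℕ) := by
  intro c
  set a := momentWindow (R := ℝ) n n (by omega)
  set b := momentWindow (R := ℝ) n (n + 1) le_rfl
  set M := hankel (R := ℝ) n
  have hGu : M u = G := Matrix.ext fun i j => (hG i j).symm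
  have hCl' : Cl = fun w => b w ⬝ᵥ (M w)⁻¹ *ᵥ a w := funext hCl
  have hGsymm : G⁻¹.IsSymm := (hGu ▸ hankel_isSymm n u).inv
  calc p c * pp c
      = (c ^ n - powerVec n c ⬝ᵥ G⁻¹ *ᵥ a u) * (c ^ (n + 1) - powerVec n c ⬝ᵥ G⁻¹ *ᵥ b u) := by
        rw [hp, hpp]; rfl
    _ = c ^ n * c ^ (n + 1) - fderiv ℝ Cl u (powerVec _ c) := by
        rw [hGsymm.sub_dotProduct_mul_sub_dotProduct, hCl',
          fderiv_dotProduct_inv_mulVec_apply a.differentiableAt b.differentiableAt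
            M.differentiableAt (hGu ▸ hGinv),
          a.fderiv, b.fderiv, M.fderiv, momentWindow_pow, momentWindow_pow, hankel_pow, hGu]
    _ = _ := by
        rw [← pow_add, map_eq_sum_map_single_mul (fderiv ℝ Cl u), show n + (n + 1) = 2 * n + 1 by ring]
        rfl
end

section
/- (Cauchy interlacing for bordered symmetric matrices) Let A = [[B, b],[b^T, c]] ∈ ℝ^{n×n} be symmetric, where B ∈ ℝ^{(n−1)×(n−1)} is symmetric with distinct eigenvalues λ_1 < λ_2 < … < λ_{n−1}, and no eigenvector of B is orthogonal to b ∈ ℝ^{n−1}. Then the eigenvalues μ_1 ≤ … ≤ μ_n of A satisfy strict interlacing: μ_1 < λ_1 < μ_2 < … < μ_{n−1} < λ_{n−1} < μ_n. -/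
/-!
Let `u` be an orthonormal eigenbasis of `B` (orthogonal because the eigenvalues are distinct) and
`β k = u k ⬝ᵥ b`. For `μ` not an eigenvalue of `B`, the vector `(x, 1)` with
`x = ∑ k, β k / (μ - λ k) • u k = (μ - B)⁻¹ b` satisfies the first `n` rows of `A w = μ w`, and the
last row says that `μ` is a zero of the secular function `c - μ + ∑ k, β k ^ 2 / (μ - λ k)`.
Because no `β k` vanishes, this function tends to `+∞` at the left end and to `-∞` at the right end
of each of the `n + 1` intervals `(-∞, λ₁), (λ₁, λ₂), …, (λₙ, +∞)`, so it has a zero in each.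
-/

open Matrix Filter Set Topology

section Eigenvectors

variable {m : Type*} [Fintype m]

lemma dotProduct_eq_zero_of_mulVec_eq_smul {B : Matrix m m ℝ} (hB : Bᵀ = B) {v w : m → ℝ}
    {s t : ℝ} (hst : s ≠ t) (hv : B *ᵥ v = s • v) (hw : B *ᵥ w = t • w) : v ⬝ᵥ w = 0 := by
  have h : s * (v ⬝ᵥ w) = t * (v ⬝ᵥ w) := by
    calc s * (v ⬝ᵥ w) = (B *ᵥ v) ⬝ᵥ w := by rw [hv, smul_dotProduct, smul_eq_mul]
      _ = v ⬝ᵥ (B *ᵥ w) := by rw [dotProduct_mulVec, ← mulVec_transpose, hB]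
      _ = t * (v ⬝ᵥ w) := by rw [hw, dotProduct_smul, smul_eq_mul]
  have h' : (s - t) * (v ⬝ᵥ w) = 0 := by linear_combination h
  exact (mul_eq_zero.mp h').resolve_left (sub_ne_zero.mpr hst)

lemma exists_orthonormal_eigenvectors {ι : Type*} [DecidableEq ι] {B : Matrix m m ℝ}
    (hB : Bᵀ = B) {lam : ι → ℝ} (hlam : Function.Injective lam)
    (heig : ∀ i, ∃ v : m → ℝ, v ≠ 0 ∧ B *ᵥ v = lam i • v) :
    ∃ u : ι → m → ℝ, (∀ i j, u i ⬝ᵥ u j = if i = j then 1 else 0) ∧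
      ∀ i, B *ᵥ u i = lam i • u i := by
  choose v hv0 hvB using heig
  have hpos : ∀ i, 0 < v i ⬝ᵥ v i := fun i => by
    simpa using dotProduct_self_star_pos_iff.mpr (hv0 i)
  refine ⟨fun i => (√(v i ⬝ᵥ v i))⁻¹ • v i, fun i j => ?_, fun i => ?_⟩
  · rw [smul_dotProduct, dotProduct_smul, smul_eq_mul, smul_eq_mul]
    split_ifs with hij
    · subst hij
      rw [← mul_assoc, ← mul_inv, Real.mul_self_sqrt (hpos i).le, inv_mul_cancel₀ (hpos i).ne']
    · rw [dotProduct_eq_zero_of_mulVec_eq_smul hB (hlam.ne hij) (hvB i) (hvB j), mul_zero,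
        mul_zero]
  · rw [mulVec_smul, hvB, smul_comm]

lemma sum_dotProduct_smul_eq [DecidableEq m] {u : m → m → ℝ}
    (hu : ∀ i j, u i ⬝ᵥ u j = if i = j then 1 else 0) (y : m → ℝ) : ∑ k, (u k ⬝ᵥ y) • u k = y := by
  have hUUt : of u * (of u)ᵀ = 1 := by
    ext i j
    simpa [mul_apply, dotProduct, one_apply] using hu i j
  have hUtU : (of u)ᵀ * of u = 1 := mul_eq_one_comm.mp hUUt
  calc ∑ k, (u k ⬝ᵥ y) • u k = (of u)ᵀ *ᵥ (of u *ᵥ y) := by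
        ext i
        simp [mulVec, dotProduct, Finset.sum_apply, mul_comm]
    _ = y := by rw [mulVec_mulVec, hUtU, one_mulVec]

lemma mulVec_resolvent_add {ι : Type*} [Fintype ι] {B : Matrix m m ℝ}
    {u : ι → m → ℝ} {lam : ι → ℝ} (huB : ∀ k, B *ᵥ u k = lam k • u k) {b : m → ℝ}
    (hb : ∑ k, (u k ⬝ᵥ b) • u k = b) {μ : ℝ} (hμ : ∀ k, μ ≠ lam k) :
    B *ᵥ (∑ k, ((u k ⬝ᵥ b) / (μ - lam k)) • u k) + b
      = μ • ∑ k, ((u k ⬝ᵥ b) / (μ - lam k)) • u k := by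
  conv_lhs => arg 2; rw [← hb]
  simp only [mulVec_sum, mulVec_smul, huB, smul_smul, ← Finset.sum_add_distrib, ← add_smul,
    Finset.smul_sum]
  refine Finset.sum_congr rfl fun k _ => congrArg (· • u k) ?_
  field_simp [sub_ne_zero.mpr (hμ k)]
  ring

end Eigenvectors

lemma bordered_mulVec_snoc_one {R : Type*} [Semiring R] {n : ℕ}
    {A : Matrix (Fin (n + 1)) (Fin (n + 1)) R} {B : Matrix (Fin n) (Fin n) R} {b : Fin n → R}
    {c : R} (hA11 : ∀ i j : Fin n, A i.castSucc j.castSucc = B i j)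
    (hA12 : ∀ i : Fin n, A i.castSucc (Fin.last n) = b i)
    (hA21 : ∀ j : Fin n, A (Fin.last n) j.castSucc = b j)
    (hA22 : A (Fin.last n) (Fin.last n) = c) {x : Fin n → R} {μ : R}
    (hx : B *ᵥ x + b = μ • x) (hc : b ⬝ᵥ x + c = μ) :
    A *ᵥ Fin.snoc x 1 = μ • Fin.snoc x 1 := by
  ext p
  induction p using Fin.lastCases with
  | last => simpa [mulVec, dotProduct, Fin.sum_univ_castSucc, hA21, hA22] using hc
  | cast i => simpa [mulVec, dotProduct, Fin.sum_univ_castSucc, hA11, hA12] using congrFun hx i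

noncomputable def secular {ι : Type*} [Fintype ι] (c : ℝ) (lam w : ι → ℝ) (μ : ℝ) : ℝ :=
  c - μ + ∑ k, w k / (μ - lam k)

section Secular

variable {ι : Type*} [Fintype ι] (c : ℝ) (lam w : ι → ℝ)

lemma continuousOn_secular : ContinuousOn (secular c lam w) {μ | ∀ k, μ ≠ lam k} := by
  refine (continuousOn_const.sub continuousOn_id).add (continuousOn_finsetSum _ fun k _ => ?_)
  exact continuousOn_const.div (continuousOn_id.sub continuousOn_const)
    fun μ hμ => sub_ne_zero.mpr (hμ k)

lemma tendsto_secular_atBot : Tendsto (secular c lam w) atBot atTop := by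
  have hsum : Tendsto (fun μ => ∑ k, w k / (μ - lam k)) atBot (𝓝 0) := by
    simpa [sub_eq_add_neg] using tendsto_finsetSum Finset.univ fun k _ =>
      tendsto_const_nhds.div_atBot (tendsto_atBot_add_const_right _ (-lam k) tendsto_id)
  have hlin : Tendsto (fun μ : ℝ => c - μ) atBot atTop := by
    simpa [sub_eq_add_neg] using tendsto_atTop_add_const_left _ c tendsto_neg_atBot_atTop
  exact hlin.atTop_add hsum

lemma tendsto_secular_atTop : Tendsto (secular c lam w) atTop atBot := by
  have hsum : Tendsto (fun μ => ∑ k, w k / (μ - lam k)) atTop (𝓝 0) := by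
    simpa [sub_eq_add_neg] using tendsto_finsetSum Finset.univ fun k _ =>
      tendsto_const_nhds.div_atTop (tendsto_atTop_add_const_right _ (-lam k) tendsto_id)
  have hlin : Tendsto (fun μ : ℝ => c - μ) atTop atBot := by
    simpa [sub_eq_add_neg] using tendsto_atBot_add_const_left _ c tendsto_neg_atTop_atBot
  exact hlin.atBot_add hsum

variable {lam} (hlam : Function.Injective lam) (i : ι)
include hlam

lemma tendsto_secular_sub_pole [DecidableEq ι] :
    Tendsto (fun μ => secular c lam w μ - w i / (μ - lam i)) (𝓝 (lam i))
      (𝓝 (c - lam i + ∑ k ∈ Finset.univ.erase i, w k / (lam i - lam k))) := by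
  have hrest : ∀ μ, secular c lam w μ - w i / (μ - lam i)
      = c - μ + ∑ k ∈ Finset.univ.erase i, w k / (μ - lam k) := fun μ => by
    rw [secular, ← Finset.add_sum_erase _ _ (Finset.mem_univ i)]
    ring
  simp only [hrest]
  refine ((continuous_const.sub continuous_id).tendsto _).add
    (tendsto_finsetSum _ fun k hk => tendsto_const_nhds.div
      ((continuous_id.sub continuous_const).tendsto _) ?_)
  exact sub_ne_zero.mpr (hlam.ne (Finset.ne_of_mem_erase hk).symm)

lemma tendsto_secular_nhdsGT (hw : 0 < w i) : Tendsto (secular c lam w) (𝓝[>] lam i) atTop := by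
  classical
  have hpole : Tendsto (fun μ => w i / (μ - lam i)) (𝓝[>] lam i) atTop := by
    have h : Tendsto (· - lam i) (𝓝[>] lam i) (𝓝[>] 0) := by
      rw [Tendsto, map_subRight_nhdsGT, sub_self]
    simpa [div_eq_mul_inv] using h.inv_tendsto_nhdsGT_zero.const_mul_atTop hw
  simpa using ((tendsto_secular_sub_pole c w hlam i).mono_left nhdsWithin_le_nhds).add_atTop hpole

lemma tendsto_secular_nhdsLT (hw : 0 < w i) : Tendsto (secular c lam w) (𝓝[<] lam i) atBot := by
  classical
  have hpole : Tendsto (fun μ => w i / (μ - lam i)) (𝓝[<] lam i) atBot := by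
    have h : Tendsto (· - lam i) (𝓝[<] lam i) (𝓝[<] 0) := by
      rw [Tendsto, map_subRight_nhdsLT, sub_self]
    simpa [div_eq_mul_inv] using (tendsto_inv_nhdsLT_zero.comp h).const_mul_atBot hw
  simpa using ((tendsto_secular_sub_pole c w hlam i).mono_left nhdsWithin_le_nhds).add_atBot hpole

end Secular

section Gap

variable {n : ℕ} {lam : Fin n → ℝ}

/-- `gap lam j` is the open interval between `lam (j - 1)` and `lam j`, where `lam (-1) = -∞`
and `lam n = +∞`. -/
def gap (lam : Fin n → ℝ) (j : Fin (n + 1)) : Set ℝ :=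
  {μ | ∀ k : Fin n, (k.castSucc < j → lam k < μ) ∧ (j ≤ k.castSucc → μ < lam k)}

lemma gap_subset (j : Fin (n + 1)) : gap lam j ⊆ {μ | ∀ k, μ ≠ lam k} := fun _ hμ k =>
  (lt_or_ge k.castSucc j).elim (fun h => ((hμ k).1 h).ne') (fun h => ((hμ k).2 h).ne)

lemma ordConnected_gap (j : Fin (n + 1)) : (gap lam j).OrdConnected :=
  ⟨fun _ hx _ hy _ hz k =>
    ⟨fun h => ((hx k).1 h).trans_le hz.1, fun h => hz.2.trans_lt ((hy k).2 h)⟩⟩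

lemma lt_of_mem_gap {j j' : Fin (n + 1)} (hj : j < j') {μ μ' : ℝ} (hμ : μ ∈ gap lam j)
    (hμ' : μ' ∈ gap lam j') : μ < μ' := by
  set k := j.castPred (Fin.ne_last_of_lt hj)
  have hk : k.castSucc = j := Fin.castSucc_castPred _ _
  exact ((hμ k).2 hk.ge).trans ((hμ' k).1 (hk ▸ hj))

variable (c : ℝ) (w : Fin n → ℝ) (hlam : StrictMono lam) (hw : ∀ k, 0 < w k)
include hlam hw

lemma exists_tendsto_secular_atTop_le_gap (j : Fin (n + 1)) :
    ∃ l : Filter ℝ, l.NeBot ∧ l ≤ 𝓟 (gap lam j) ∧ Tendsto (secular c lam w) l atTop := by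
  induction j using Fin.cases with
  | zero =>
    refine ⟨atBot, inferInstance, le_principal_iff.mpr ?_, tendsto_secular_atBot c lam w⟩
    exact eventually_all.mpr fun k => (eventually_lt_atBot (lam k)).mono fun μ hμ =>
      ⟨fun hk => absurd hk (Fin.not_lt_zero _), fun _ => hμ⟩
  | succ i =>
    refine ⟨𝓝[>] lam i, inferInstance, le_principal_iff.mpr (eventually_all.mpr fun k => ?_),
      tendsto_secular_nhdsGT c w hlam.injective i (hw i)⟩
    rcases le_or_gt k i with hki | hik
    · filter_upwards [self_mem_nhdsWithin] with μ hμ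
      exact ⟨fun _ => (hlam.monotone hki).trans_lt hμ,
        fun h => absurd (Fin.castSucc_lt_succ_iff.mpr hki) h.not_gt⟩
    · filter_upwards [nhdsWithin_le_nhds (eventually_lt_nhds (hlam hik))] with μ hμ
      exact ⟨fun h => absurd (Fin.castSucc_lt_succ_iff.mp h) hik.not_ge, fun _ => hμ⟩

lemma exists_tendsto_secular_atBot_le_gap (j : Fin (n + 1)) :
    ∃ l : Filter ℝ, l.NeBot ∧ l ≤ 𝓟 (gap lam j) ∧ Tendsto (secular c lam w) l atBot := by
  induction j using Fin.lastCases with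
  | last =>
    refine ⟨atTop, inferInstance, le_principal_iff.mpr ?_, tendsto_secular_atTop c lam w⟩
    exact eventually_all.mpr fun k => (eventually_gt_atTop (lam k)).mono fun μ hμ =>
      ⟨fun _ => hμ, fun hk => absurd hk (Fin.castSucc_lt_last k).not_ge⟩
  | cast i =>
    refine ⟨𝓝[<] lam i, inferInstance, le_principal_iff.mpr (eventually_all.mpr fun k => ?_),
      tendsto_secular_nhdsLT c w hlam.injective i (hw i)⟩
    rcases lt_or_ge k i with hki | hik
    · filter_upwards [nhdsWithin_le_nhds (eventually_gt_nhds (hlam hki))] with μ hμ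
      exact ⟨fun _ => hμ, fun h => absurd (Fin.castSucc_le_castSucc_iff.mp h) hki.not_ge⟩
    · filter_upwards [self_mem_nhdsWithin] with μ hμ
      exact ⟨fun h => absurd (Fin.castSucc_lt_castSucc_iff.mp h) hik.not_gt,
        fun _ => (show μ < lam i from hμ).trans_le (hlam.monotone hik)⟩

lemma exists_secular_eq_zero_mem_gap (j : Fin (n + 1)) :
    ∃ μ ∈ gap lam j, secular c lam w μ = 0 := by
  obtain ⟨l₁, _, hl₁, h₁⟩ := exists_tendsto_secular_atTop_le_gap c w hlam hw j
  obtain ⟨l₂, _, hl₂, h₂⟩ := exists_tendsto_secular_atBot_le_gap c w hlam hw j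
  exact (ordConnected_gap j).isPreconnected.intermediate_value_Iii hl₂ hl₁
    ((continuousOn_secular c lam w).mono (gap_subset j)) h₂ h₁ (mem_univ 0)

end Gap

theorem stmt_8_general (n : ℕ)
    (B : Matrix (Fin n) (Fin n) ℝ) (hB : Bᵀ = B)
    (b : Fin n → ℝ) (c : ℝ)
    (A : Matrix (Fin (n + 1)) (Fin (n + 1)) ℝ)
    (hA11 : ∀ i j : Fin n, A i.castSucc j.castSucc = B i j)
    (hA12 : ∀ i : Fin n, A i.castSucc (Fin.last n) = b i)
    (hA21 : ∀ j : Fin n, A (Fin.last n) j.castSucc = b j)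
    (hA22 : A (Fin.last n) (Fin.last n) = c)
    (lam : Fin n → ℝ) (hlam : StrictMono lam)
    (heig : ∀ i : Fin n, ∃ v : Fin n → ℝ, v ≠ 0 ∧ B *ᵥ v = lam i • v)
    (horth : ∀ v : Fin n → ℝ, v ≠ 0 → (∃ t : ℝ, B *ᵥ v = t • v) → v ⬝ᵥ b ≠ 0) :
    ∃ mu : Fin (n + 1) → ℝ, StrictMono mu ∧
      (∀ j : Fin (n + 1), ∃ w : Fin (n + 1) → ℝ, w ≠ 0 ∧ A *ᵥ w = mu j • w) ∧
      ∀ i : Fin n, mu i.castSucc < lam i ∧ lam i < mu i.succ := by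
  obtain ⟨u, hu, huB⟩ := exists_orthonormal_eigenvectors hB hlam.injective heig
  have hw : ∀ k, 0 < (u k ⬝ᵥ b) ^ 2 := fun k =>
    sq_pos_of_ne_zero (horth (u k) (fun h => by simpa [h] using hu k k) ⟨lam k, huB k⟩)
  choose mu hmu hsec using exists_secular_eq_zero_mem_gap c _ hlam hw
  refine ⟨mu, fun j j' hj => lt_of_mem_gap hj (hmu j) (hmu j'), fun j => ?_,
    fun i => ⟨(hmu _ i).2 le_rfl, (hmu _ i).1 Fin.castSucc_lt_succ⟩⟩
  set x := ∑ k, ((u k ⬝ᵥ b) / (mu j - lam k)) • u k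
  have hdot : b ⬝ᵥ x = ∑ k, (u k ⬝ᵥ b) ^ 2 / (mu j - lam k) := by
    refine (dotProduct_sum _ _ _).trans (Finset.sum_congr rfl fun k _ => ?_)
    rw [dotProduct_smul, dotProduct_comm, smul_eq_mul]
    ring
  refine ⟨Fin.snoc x 1, fun h => one_ne_zero (α := ℝ) (by simpa using congrFun h (Fin.last n)),
    bordered_mulVec_snoc_one hA11 hA12 hA21 hA22
      (mulVec_resolvent_add huB (sum_dotProduct_smul_eq hu b) (gap_subset j (hmu j))) ?_⟩
  linarith [show c - mu j + ∑ k, (u k ⬝ᵥ b) ^ 2 / (mu j - lam k) = 0 from hsec j]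

theorem stmt_8 (n : ℕ) (hn : 0 < n)
    (B : Matrix (Fin n) (Fin n) ℝ) (hB : Bᵀ = B)
    (b : Fin n → ℝ) (c : ℝ)
    (A : Matrix (Fin (n + 1)) (Fin (n + 1)) ℝ)
    (hA11 : ∀ i j : Fin n, A i.castSucc j.castSucc = B i j)
    (hA12 : ∀ i : Fin n, A i.castSucc (Fin.last n) = b i)
    (hA21 : ∀ j : Fin n, A (Fin.last n) j.castSucc = b j)
    (hA22 : A (Fin.last n) (Fin.last n) = c)
    (lam : Fin n → ℝ) (hlam : StrictMono lam)
    (heig : ∀ i : Fin n, ∃ v : Fin n → ℝ, v ≠ 0 ∧ B *ᵥ v = lam i • v)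
    (hall : ∀ t : ℝ, (∃ v : Fin n → ℝ, v ≠ 0 ∧ B *ᵥ v = t • v) → ∃ i, t = lam i)
    (horth : ∀ v : Fin n → ℝ, v ≠ 0 → (∃ t : ℝ, B *ᵥ v = t • v) → v ⬝ᵥ b ≠ 0) :
    ∃ mu : Fin (n + 1) → ℝ, StrictMono mu ∧
      (∀ j : Fin (n + 1), ∃ w : Fin (n + 1) → ℝ, w ≠ 0 ∧ A *ᵥ w = mu j • w) ∧
      ∀ i : Fin n, mu i.castSucc < lam i ∧ lam i < mu i.succ :=
  stmt_8_general n B hB b c A hA11 hA12 hA21 hA22 lam hlam heig horth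
end
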